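/- arXiv:1506.05832 — 6 statements merged into one kernel-verified Lean document; each statement's English description precedes it below -/
import Mathlib

section
/- Let k be a field, K a finite separable field extension of k, Λ a k-algebra, and Γ = K ⊗_k Λ. For every finite-dimensional Γ-module M, the multiplication map μ_M : K ⊗_k M → M, given by x ⊗ m ↦ (x ⊗ 1)·m, is a split epimorphism of Γ-modules; i.e., μ_M is a surjective Γ-module homomorphism admitting a Γ-linear section ν_M with μ_M ∘ ν_M = id_M. -/
open TensorProduct

variable (k K Λ M : Type) [Field k] [Field K] [Algebra k K] [Ring Λ] [Algebra k Λ]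
variable [AddCommGroup M] [Module k M] [Module (K ⊗[k] Λ) M] [IsScalarTower k (K ⊗[k] Λ) M]

/-- The action of `λ ∈ Λ` (via `1 ⊗ λ ∈ K ⊗ Λ = Γ`) on a `Γ`-module, as a `k`-linear map. -/
noncomputable def lamAct (l : Λ) : M →ₗ[k] M where
  toFun m := ((1 : K) ⊗ₜ[k] l : K ⊗[k] Λ) • m
  map_add' := smul_add _
  map_smul' c m := smul_comm _ c m

/-- The action of a pure tensor `x ⊗ λ ∈ Γ = K ⊗ Λ` on `K ⊗ M`, where the `Γ`-module
structure of `K ⊗ M` is given by `(x ⊗ λ) • (y ⊗ m) = (x * y) ⊗ ((1 ⊗ λ) • m)`. -/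
noncomputable def gammaAct (x : K) (l : Λ) : K ⊗[k] M →ₗ[k] K ⊗[k] M :=
  TensorProduct.map (LinearMap.mulLeft k x) (lamAct k K Λ M l)

/-- The multiplication map `μ_M : K ⊗ M → M`, `x ⊗ m ↦ (x ⊗ 1) • m`. -/
noncomputable def mulMap : K ⊗[k] M →ₗ[k] M :=
  TensorProduct.lift
  { toFun := fun x =>
      { toFun := fun m => ((x ⊗ₜ[k] (1 : Λ)) : K ⊗[k] Λ) • m
        map_add' := fun m m' => smul_add _ _ _
        map_smul' := fun c m => smul_comm _ c m }
    map_add' := fun x y => LinearMap.ext fun m => by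
      simp only [LinearMap.coe_mk, AddHom.coe_mk, LinearMap.add_apply]
      rw [add_tmul, add_smul]
    map_smul' := fun c x => LinearMap.ext fun m => by
      simp only [LinearMap.coe_mk, AddHom.coe_mk, RingHom.id_apply, LinearMap.smul_apply]
      rw [← smul_tmul', smul_assoc] }


/-- smul by `c ⊗ 1` as a `k`-linear map. -/
noncomputable def kAct (c : K) : M →ₗ[k] M where
  toFun m := ((c ⊗ₜ[k] (1 : Λ)) : K ⊗[k] Λ) • m
  map_add' := smul_add _
  map_smul' r m := smul_comm _ r m

noncomputable def nuAux : K ⊗[k] K →ₗ[k] M →ₗ[k] K ⊗[k] M :=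
  TensorProduct.lift
  { toFun := fun b =>
    { toFun := fun c => (TensorProduct.mk k K M b) ∘ₗ kAct k K Λ M c
      map_add' := fun c c' => LinearMap.ext fun m => by
        simp only [LinearMap.comp_apply, LinearMap.add_apply, kAct, LinearMap.coe_mk,
          AddHom.coe_mk, TensorProduct.mk_apply]
        rw [add_tmul, add_smul, TensorProduct.tmul_add]
      map_smul' := fun r c => LinearMap.ext fun m => by
        simp only [LinearMap.comp_apply, LinearMap.smul_apply, kAct, LinearMap.coe_mk,
          AddHom.coe_mk, TensorProduct.mk_apply, RingHom.id_apply]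
        rw [← smul_tmul', smul_assoc, TensorProduct.tmul_smul] }
    map_add' := fun b b' => LinearMap.ext fun c => LinearMap.ext fun m => by
      simp only [LinearMap.coe_mk, AddHom.coe_mk, LinearMap.add_apply, LinearMap.comp_apply,
        TensorProduct.mk_apply]
      rw [add_tmul]
    map_smul' := fun r b => LinearMap.ext fun c => LinearMap.ext fun m => by
      simp only [LinearMap.coe_mk, AddHom.coe_mk, RingHom.id_apply, LinearMap.smul_apply,
        LinearMap.comp_apply, TensorProduct.mk_apply]
      rw [smul_tmul'] }

lemma nuAux_tmul (b c : K) (m : M) :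
    nuAux k K Λ M (b ⊗ₜ[k] c) m = b ⊗ₜ[k] (((c ⊗ₜ[k] (1 : Λ)) : K ⊗[k] Λ) • m) := rfl

lemma mulMap_tmul (b : K) (m : M) :
    mulMap k K Λ M (b ⊗ₜ[k] m) = ((b ⊗ₜ[k] (1 : Λ)) : K ⊗[k] Λ) • m := rfl

lemma gammaAct_tmul (x : K) (l : Λ) (b : K) (n : M) :
    gammaAct k K Λ M x l (b ⊗ₜ[k] n) =
      (x * b) ⊗ₜ[k] ((((1 : K) ⊗ₜ[k] l) : K ⊗[k] Λ) • n) := rfl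

lemma mulMap_nuAux (t : K ⊗[k] K) (m : M) :
    mulMap k K Λ M (nuAux k K Λ M t m) =
      (((Algebra.TensorProduct.lmul' k t : K) ⊗ₜ[k] (1 : Λ)) : K ⊗[k] Λ) • m := by
  induction t using TensorProduct.induction_on with
  | zero => simp [zero_tmul]
  | tmul b c =>
      rw [nuAux_tmul, mulMap_tmul, smul_smul, Algebra.TensorProduct.tmul_mul_tmul, mul_one]
      simp
  | add t t' ht ht' =>
      rw [map_add, LinearMap.add_apply, map_add, ht, ht', map_add, add_tmul, add_smul]

lemma nuAux_smul (x : K) (l : Λ) (t : K ⊗[k] K) (m : M) :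
    nuAux k K Λ M t (((x ⊗ₜ[k] l) : K ⊗[k] Λ) • m) =
      nuAux k K Λ M (((1 : K) ⊗ₜ[k] x) * t) ((((1 : K) ⊗ₜ[k] l) : K ⊗[k] Λ) • m) := by
  induction t using TensorProduct.induction_on with
  | zero => simp
  | tmul b c =>
      rw [Algebra.TensorProduct.tmul_mul_tmul, one_mul, nuAux_tmul, nuAux_tmul,
        smul_smul, smul_smul, Algebra.TensorProduct.tmul_mul_tmul,
        Algebra.TensorProduct.tmul_mul_tmul, mul_one, one_mul, mul_comm c x]
  | add t t' ht ht' => rw [mul_add, map_add, map_add, LinearMap.add_apply,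
      LinearMap.add_apply, ht, ht']

lemma gammaAct_nuAux (x : K) (l : Λ) (t : K ⊗[k] K) (m : M) :
    gammaAct k K Λ M x l (nuAux k K Λ M t m) =
      nuAux k K Λ M ((x ⊗ₜ[k] (1 : K)) * t) ((((1 : K) ⊗ₜ[k] l) : K ⊗[k] Λ) • m) := by
  induction t using TensorProduct.induction_on with
  | zero => simp
  | tmul b c =>
      simp only [Algebra.TensorProduct.tmul_mul_tmul, one_mul, mul_one, nuAux_tmul,
        gammaAct_tmul, smul_smul]
  | add t t' ht ht' => rw [mul_add, map_add, map_add, LinearMap.add_apply, map_add,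
      LinearMap.add_apply, ht, ht']

lemma mulMap_gammaAct (x : K) (l : Λ) (t : K ⊗[k] M) :
    mulMap k K Λ M (gammaAct k K Λ M x l t) = ((x ⊗ₜ[k] l : K ⊗[k] Λ)) • mulMap k K Λ M t := by
  induction t using TensorProduct.induction_on with
  | zero => simp
  | tmul b n =>
      rw [gammaAct_tmul, mulMap_tmul, mulMap_tmul, smul_smul, smul_smul,
        Algebra.TensorProduct.tmul_mul_tmul, Algebra.TensorProduct.tmul_mul_tmul,
        mul_one, one_mul, mul_one]
  | add t t' ht ht' => rw [map_add, map_add, ht, ht', map_add, smul_add]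

/-- Let `k` be a field, `K` a finite separable field extension of `k`,
`Λ` a `k`-algebra and `Γ = K ⊗ Λ`.  For every finite-dimensional `Γ`-module `M`, the
multiplication map `μ_M : K ⊗ M → M`, `x ⊗ m ↦ (x ⊗ 1) • m`, is a split epimorphism of
`Γ`-modules: it is surjective, `Γ`-linear (it is `k`-linear and commutes with the action
of all pure tensors `x ⊗ λ`), and it admits a `Γ`-linear section `ν` with `μ_M ∘ ν = id`. -/
theorem mulMap_split_epi [FiniteDimensional k K] [Algebra.IsSeparable k K]
    [FiniteDimensional k M] :
    Function.Surjective (mulMap k K Λ M) ∧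
    (∀ (x : K) (l : Λ) (t : K ⊗[k] M),
      mulMap k K Λ M (gammaAct k K Λ M x l t) = ((x ⊗ₜ[k] l : K ⊗[k] Λ)) • mulMap k K Λ M t) ∧
    ∃ ν : M →ₗ[k] K ⊗[k] M,
      (mulMap k K Λ M) ∘ₗ ν = LinearMap.id ∧
      ∀ (x : K) (l : Λ) (m : M),
        ν (((x ⊗ₜ[k] l : K ⊗[k] Λ)) • m) = gammaAct k K Λ M x l (ν m) := by
  haveI : Algebra.FormallyUnramified k K := Algebra.FormallyUnramified.of_isSeparable k K
  refine ⟨?_, mulMap_gammaAct k K Λ M, ?_⟩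
  · intro m
    exact ⟨(1 : K) ⊗ₜ[k] m, by
      rw [mulMap_tmul, ← Algebra.TensorProduct.one_def, one_smul]⟩
  · refine ⟨nuAux k K Λ M (Algebra.FormallyUnramified.elem k K), ?_, ?_⟩
    · apply LinearMap.ext
      intro m
      rw [LinearMap.comp_apply, mulMap_nuAux, Algebra.FormallyUnramified.lmul_elem,
        ← Algebra.TensorProduct.one_def, one_smul, LinearMap.id_apply]
    · intro x l m
      rw [nuAux_smul, gammaAct_nuAux, Algebra.FormallyUnramified.one_tmul_mul_elem x]
end

section
/- Let k be a field, K a finite Galois field extension of k, Λ a k-algebra, and Γ = K ⊗_k Λ. For every finite-dimensional Γ-module M there is an isomorphism of Γ-modules K ⊗_k M ≅ ⨁_{φ ∈ Gal(K/k)} M^φ, where M^φ denotes the twist of M by φ. -/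
/-!
Let `b` be a normal basis of `K/k`, indexed by `Gal(K/k)`. It identifies `K ⊗_k M` with
`Gal(K/k) → M`, and in these coordinates the map `y ⊗ m ↦ (φ ↦ (φ y ⊗ 1) • m)` is the action of
the square matrix `(φ (b ψ))_{φ, ψ}` over `K`. By Dedekind's independence of characters its rows
are linearly independent, so the matrix is invertible and the map is a bijection. It intertwines
the actions because `(φ (x y) ⊗ 1) (1 ⊗ λ) = (φ x ⊗ λ) (φ y ⊗ 1)` in `Γ`.
-/

open TensorProduct

variable (k K Λ M : Type) [Field k] [Field K] [Algebra k K] [Ring Λ] [Algebra k Λ]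
variable [AddCommGroup M] [Module k M] [Module (K ⊗[k] Λ) M] [IsScalarTower k (K ⊗[k] Λ) M]

theorem Matrix.bijective_sum_smul_of_isUnit {R V ι : Type*} [CommRing R] [AddCommGroup V]
    [Module R V] [Fintype ι] [DecidableEq ι] {A : Matrix ι ι R} (hA : IsUnit A) :
    Function.Bijective fun (v : ι → V) i => ∑ j, A i j • v j :=
  (Module.End.isUnit_iff _).mp <|
    ((hA.map (Module.toModuleEnd R V).mapMatrix).map (endVecRingEquivMatrixEnd ι R V).symm)

section Dedekind

variable {F E ι : Type*} [Field F] [Field E] [Algebra F E]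

theorem linearIndependent_algEquiv_apply_basis (b : Module.Basis ι F E) :
    LinearIndependent E fun (φ : E ≃ₐ[F] E) i => φ (b i) :=
  ((linearIndependent_toLinearMap F E E).comp _ AlgEquiv.coe_toAlgHom_injective).map'
    (b.constr E).symm.toLinearMap (LinearEquiv.ker _)

theorem isUnit_algEquiv_apply_basis [Fintype (E ≃ₐ[F] E)] [DecidableEq (E ≃ₐ[F] E)]
    (b : Module.Basis (E ≃ₐ[F] E) F E) :
    IsUnit (Matrix.of fun φ ψ : E ≃ₐ[F] E => φ (b ψ)) :=
  Matrix.linearIndependent_rows_iff_isUnit.mp (linearIndependent_algEquiv_apply_basis b)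

end Dedekind

section TensorToPiGal

variable (F E V : Type*) [Field F] [Field E] [Algebra F E] [AddCommGroup V] [Module F V]
  [Module E V] [IsScalarTower F E V]

noncomputable def tensorToPiGal : E ⊗[F] V →ₗ[F] (E ≃ₐ[F] E) → V :=
  LinearMap.pi fun φ =>
    (LinearMap.id.liftBaseChange E).restrictScalars F ∘ₗ φ.toLinearMap.rTensor V

@[simp]
theorem tensorToPiGal_tmul (y : E) (v : V) (φ : E ≃ₐ[F] E) :
    tensorToPiGal F E V (y ⊗ₜ v) φ = φ y • v := by
  simp [tensorToPiGal]

theorem tensorToPiGal_bijective [FiniteDimensional F E] [IsGalois F E] :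
    Function.Bijective (tensorToPiGal F E V) := by
  classical
  let b := IsGalois.normalBasis F E
  let coords : ((E ≃ₐ[F] E) → V) ≃ₗ[F] E ⊗[F] V :=
    (Finsupp.linearEquivFunOnFinite F V _).symm ≪≫ₗ (equivFinsuppOfBasisLeft b).symm
  have hcoords : tensorToPiGal F E V ∘ coords = fun v φ => ∑ ψ, φ (b ψ) • v ψ := by
    funext v φ
    simp [coords, Finsupp.sum_fintype]
  refine (Function.Bijective.of_comp_iff _ coords.bijective).mp ?_
  rw [hcoords]
  exact Matrix.bijective_sum_smul_of_isUnit (isUnit_algEquiv_apply_basis b)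

end TensorToPiGal

theorem tensor_iso_directSum_twists [FiniteDimensional k K] [IsGalois k K] :
    ∃ e : (K ⊗[k] M) ≃ₗ[k] ((K ≃ₐ[k] K) → M),
      ∀ (x : K) (l : Λ) (t : K ⊗[k] M) (φ : K ≃ₐ[k] K),
        e (gammaAct k K Λ M x l t) φ = ((φ x ⊗ₜ[k] l : K ⊗[k] Λ)) • e t φ := by
  let _ : Module K M := Module.compHom M (algebraMap K (K ⊗[k] Λ))
  have _ : IsScalarTower k K M :=
    .of_algebraMap_smul fun c m => IsScalarTower.algebraMap_smul (K ⊗[k] Λ) c m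
  refine ⟨.ofBijective _ (tensorToPiGal_bijective k K M), fun x l t φ => ?_⟩
  induction t using TensorProduct.induction_on with
  | zero => simp
  | tmul y m =>
    show ((φ (x * y) ⊗ₜ[k] (1 : Λ) : K ⊗[k] Λ)) • ((1 : K) ⊗ₜ[k] l : K ⊗[k] Λ) • m
      = ((φ x ⊗ₜ[k] l : K ⊗[k] Λ)) • ((φ y ⊗ₜ[k] (1 : Λ) : K ⊗[k] Λ)) • m
    simp only [← mul_smul, Algebra.TensorProduct.tmul_mul_tmul, map_mul, mul_one, one_mul]
  | add t₁ t₂ h₁ h₂ => simp only [map_add, Pi.add_apply, h₁, h₂, smul_add]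
end

section
/- Let k be a field, K a finite field extension of k of degree n, Λ a k-algebra, and Γ = K ⊗_k Λ. Assume that for all finite-dimensional Γ-modules A, B, A ≅ B as Λ-modules implies A ≅ B as Γ-modules. Then for all finite-dimensional Γ-modules X and M, dim_k Hom_Λ(X, M) = n · dim_k Hom_Γ(X, M). -/
open TensorProduct

variable (k K Λ : Type) [Field k] [Field K] [Algebra k K] [Ring Λ] [Algebra k Λ]

section

variable (X M : Type) [AddCommGroup X] [AddCommGroup M] [Module k X] [Module k M]
  [Module (K ⊗[k] Λ) X] [Module (K ⊗[k] Λ) M]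
  [IsScalarTower k (K ⊗[k] Λ) X] [IsScalarTower k (K ⊗[k] Λ) M]

/-- For `Γ = K ⊗ Λ`-modules `X` and `M`, `Hom_Λ(X, M)` (both modules viewed as
`Λ`-modules via restriction along `λ ↦ 1 ⊗ λ`), realised as the `k`-subspace of the
`k`-linear maps `X → M` commuting with the `Λ`-actions. -/
def homSpaceResBoth : Submodule k (X →ₗ[k] M) where
  carrier := {f | ∀ (l : Λ) (x : X),
    f ((((1 : K) ⊗ₜ[k] l : K ⊗[k] Λ)) • x) = (((1 : K) ⊗ₜ[k] l : K ⊗[k] Λ)) • f x}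
  add_mem' hf hg := by intro l x; simp_all [smul_add]
  zero_mem' := by intro l x; simp
  smul_mem' c f hf := by
    intro l x
    simp only [LinearMap.smul_apply]
    rw [hf l x]
    exact smul_comm c _ (f x)

/-- `Hom_Γ(X, M)` realised as the `k`-subspace of the `k`-linear maps `X → M`
commuting with the `Γ = K ⊗ Λ`-action. -/
def homSpaceGamma : Submodule k (X →ₗ[k] M) where
  carrier := {f | ∀ (g : K ⊗[k] Λ) (x : X), f (g • x) = g • f x}
  add_mem' hf hg := by intro g x; simp_all [smul_add]
  zero_mem' := by intro g x; simp
  smul_mem' c f hf := by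
    intro g x
    simp only [LinearMap.smul_apply]
    rw [hf g x]
    exact smul_comm c g (f x)

end

/-! ### Auxiliary constructions -/

noncomputable section Aux

namespace HomResAux

variable (k K Λ : Type) [Field k] [Field K] [Algebra k K] [Ring Λ] [Algebra k Λ]
variable (X : Type) [AddCommGroup X] [Module k X]
  [Module (K ⊗[k] Λ) X] [IsScalarTower k (K ⊗[k] Λ) X]

/-- The action of `Λ` on a `Γ`-module `X`, as an algebra map to endomorphisms. -/
def lamEnd : Λ →ₐ[k] Module.End k X :=
  ((Algebra.lsmul k k X : (K ⊗[k] Λ) →ₐ[k] Module.End k X)).comp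
    (Algebra.TensorProduct.includeRight (R := k) (A := K) (B := Λ))

/-- `lTensor` as an algebra hom on endomorphism algebras. -/
def lTensorEndAlgHom : Module.End k X →ₐ[k] Module.End k (K ⊗[k] X) where
  toFun f := LinearMap.lTensor K f
  map_one' := LinearMap.lTensor_id K X
  map_mul' f g := LinearMap.lTensor_comp K f g
  map_zero' := LinearMap.lTensor_zero K
  map_add' f g := LinearMap.lTensor_add K f g
  commutes' c := by
    show LinearMap.lTensor K (algebraMap k (Module.End k X) c)
      = algebraMap k (Module.End k (K ⊗[k] X)) c
    rw [Module.algebraMap_end_eq_smul_id, Module.algebraMap_end_eq_smul_id,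
      LinearMap.lTensor_smul, LinearMap.lTensor_id]

/-- The `Γ = K ⊗ Λ` action on `K ⊗ X`, as an algebra map to endomorphisms. -/
def gammaEnd : (K ⊗[k] Λ) →ₐ[k] Module.End k (K ⊗[k] X) :=
  Algebra.TensorProduct.lift (Algebra.lsmul k k (K ⊗[k] X))
    ((lTensorEndAlgHom k K X).comp (lamEnd k K Λ X))
    (by
      intro a l
      show _ = _
      refine TensorProduct.ext' fun b x => ?_
      simp [Module.End.mul_apply, lamEnd, lTensorEndAlgHom, smul_tmul'])

/-- The induced `Γ`-module structure on `K ⊗ X`. -/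
instance : Module (K ⊗[k] Λ) (K ⊗[k] X) := Module.compHom _ (gammaEnd k K Λ X).toRingHom

lemma gamma_smul_def (g : K ⊗[k] Λ) (v : K ⊗[k] X) : g • v = gammaEnd k K Λ X g v := rfl

lemma gamma_smul_tmul (a : K) (l : Λ) (b : K) (x : X) :
    (a ⊗ₜ[k] l : K ⊗[k] Λ) • (b ⊗ₜ[k] x : K ⊗[k] X)
      = (a * b) ⊗ₜ[k] (((1 : K) ⊗ₜ[k] l : K ⊗[k] Λ) • x) := by
  rw [gamma_smul_def]
  simp [gammaEnd, lamEnd, lTensorEndAlgHom, Module.End.mul_apply, smul_tmul']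

instance : IsScalarTower k (K ⊗[k] Λ) (K ⊗[k] X) :=
  ⟨fun c g v => by
    show gammaEnd k K Λ X (c • g) v = c • gammaEnd k K Λ X g v
    rw [map_smul]
    rfl⟩

variable [FiniteDimensional k K]

/-- Forward map `K ⊗ X → Xⁿ` using the finite basis of `K` over `k`. -/
def toPi : (K ⊗[k] X) →ₗ[k] (Fin (Module.finrank k K) → X) :=
  TensorProduct.lift
    (LinearMap.mk₂ k (fun a x i => (Module.finBasis k K).repr a i • x)
      (fun a a' x => by
        funext i; simp [add_smul])
      (fun c a x => by
        funext i; simp [mul_smul])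
      (fun a x x' => by
        funext i; simp [smul_add])
      (fun c a x => by
        funext i; exact smul_comm _ _ _))

lemma toPi_tmul (a : K) (x : X) (i : Fin (Module.finrank k K)) :
    toPi k K X (a ⊗ₜ[k] x) i = (Module.finBasis k K).repr a i • x := rfl

/-- Backward map `Xⁿ → K ⊗ X`. -/
def fromPi : (Fin (Module.finrank k K) → X) →ₗ[k] (K ⊗[k] X) :=
  ∑ i, (TensorProduct.mk k K X (Module.finBasis k K i)).comp (LinearMap.proj i)

/-- `K ⊗ X ≅ Xⁿ` as `k`-vector spaces. -/
def psi : (K ⊗[k] X) ≃ₗ[k] (Fin (Module.finrank k K) → X) :=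
  LinearEquiv.ofLinear (toPi k K X) (fromPi k K X)
    (by
      refine LinearMap.ext fun f => funext fun j => ?_
      simp only [fromPi, LinearMap.comp_apply, LinearMap.sum_apply, LinearMap.coe_comp,
        Function.comp_apply, LinearMap.proj_apply, TensorProduct.mk_apply, map_sum,
        LinearMap.id_apply]
      rw [Finset.sum_apply]
      simp only [toPi_tmul, Module.Basis.repr_self]
      rw [Finset.sum_eq_single j]
      · simp
      · intro i _ hij; simp [Finsupp.single_apply_eq_zero, hij]
      · simp)
    (by
      refine TensorProduct.ext' fun a x => ?_
      simp only [LinearMap.comp_apply, LinearMap.id_apply, fromPi, LinearMap.sum_apply,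
        LinearMap.coe_comp, Function.comp_apply, LinearMap.proj_apply, TensorProduct.mk_apply,
        toPi_tmul]
      have : ∀ i, (Module.finBasis k K) i ⊗ₜ[k] ((Module.finBasis k K).repr a i • x)
          = ((Module.finBasis k K).repr a i • Module.finBasis k K i) ⊗ₜ[k] x := by
        intro i; rw [TensorProduct.tmul_smul, TensorProduct.smul_tmul']
      rw [Finset.sum_congr rfl fun i _ => this i, ← TensorProduct.sum_tmul,
        Module.Basis.sum_repr])

lemma psi_comm (l : Λ) (v : K ⊗[k] X) :
    psi k K X (((1 : K) ⊗ₜ[k] l : K ⊗[k] Λ) • v)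
      = ((1 : K) ⊗ₜ[k] l : K ⊗[k] Λ) • psi k K X v := by
  induction v using TensorProduct.induction_on with
  | zero => simp
  | tmul a x =>
      rw [gamma_smul_tmul, one_mul]
      funext i
      show toPi k K X _ i = _
      rw [toPi_tmul]
      have : (((1 : K) ⊗ₜ[k] l : K ⊗[k] Λ) • psi k K X (a ⊗ₜ[k] x)) i
          = ((1 : K) ⊗ₜ[k] l : K ⊗[k] Λ) • (psi k K X (a ⊗ₜ[k] x) i) := rfl
      rw [this]
      show _ = ((1 : K) ⊗ₜ[k] l : K ⊗[k] Λ) • ((Module.finBasis k K).repr a i • x)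
      rw [smul_comm]
  | add v w hv hw => rw [smul_add, map_add, map_add, hv, hw, smul_add]

section WithM

variable (M : Type) [AddCommGroup M] [Module k M]
  [Module (K ⊗[k] Λ) M] [IsScalarTower k (K ⊗[k] Λ) M]

/-- Adjunction: `Hom_Λ(X, M) ≅ Hom_Γ(K ⊗ X, M)` as `k`-vector spaces. -/
def adjEquiv :
    homSpaceResBoth k K Λ X M ≃ₗ[k] homSpaceGamma k K Λ (K ⊗[k] X) M where
  toFun f := ⟨TensorProduct.lift
    (LinearMap.mk₂ k (fun a x => (a ⊗ₜ[k] (1 : Λ) : K ⊗[k] Λ) • f.1 x)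
      (fun a a' x => by
        show ((a + a') ⊗ₜ[k] (1 : Λ) : K ⊗[k] Λ) • f.1 x = _
        rw [TensorProduct.add_tmul, add_smul])
      (fun c a x => by
        show ((c • a) ⊗ₜ[k] (1 : Λ) : K ⊗[k] Λ) • f.1 x
          = c • ((a ⊗ₜ[k] (1 : Λ) : K ⊗[k] Λ) • f.1 x)
        rw [← TensorProduct.smul_tmul', smul_assoc])
      (fun a x x' => by
        show (a ⊗ₜ[k] (1 : Λ) : K ⊗[k] Λ) • f.1 (x + x') = _
        rw [map_add, smul_add])
      (fun c a x => by
        show (a ⊗ₜ[k] (1 : Λ) : K ⊗[k] Λ) • f.1 (c • x)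
          = c • ((a ⊗ₜ[k] (1 : Λ) : K ⊗[k] Λ) • f.1 x)
        rw [map_smul, smul_comm])), by
    intro g v
    induction g using TensorProduct.induction_on with
    | zero => simp
    | tmul a l =>
        induction v using TensorProduct.induction_on with
        | zero => simp
        | tmul b x =>
            rw [gamma_smul_tmul]
            simp only [TensorProduct.lift.tmul, LinearMap.mk₂_apply]
            rw [f.2 l x, ← mul_smul, ← mul_smul, Algebra.TensorProduct.tmul_mul_tmul,
              Algebra.TensorProduct.tmul_mul_tmul, mul_one, one_mul, mul_one]
        | add v w hv hw => rw [smul_add, map_add, hv, hw, map_add, smul_add]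
    | add g g' hg hg' => rw [add_smul, map_add, hg, hg', add_smul]⟩
  map_add' f g := by
    apply Subtype.ext
    refine TensorProduct.ext' fun a x => ?_
    simp [smul_add]
  map_smul' c f := by
    apply Subtype.ext
    refine TensorProduct.ext' fun a x => ?_
    simp only [TensorProduct.lift.tmul, LinearMap.mk₂_apply, SetLike.val_smul,
      LinearMap.smul_apply, RingHom.id_apply]
    rw [smul_comm]
  invFun g := ⟨g.1.comp (TensorProduct.mk k K X 1), by
    intro l x
    simp only [LinearMap.comp_apply, TensorProduct.mk_apply]
    rw [show (1 : K) ⊗ₜ[k] (((1 : K) ⊗ₜ[k] l : K ⊗[k] Λ) • x)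
        = ((1 : K) ⊗ₜ[k] l : K ⊗[k] Λ) • ((1 : K) ⊗ₜ[k] x : K ⊗[k] X) by
      rw [gamma_smul_tmul, one_mul]]
    exact g.2 _ _⟩
  left_inv f := by
    apply Subtype.ext
    refine LinearMap.ext fun x => ?_
    simp only [LinearMap.comp_apply, TensorProduct.mk_apply, TensorProduct.lift.tmul,
      LinearMap.mk₂_apply]
    rw [← Algebra.TensorProduct.one_def, one_smul]
  right_inv g := by
    apply Subtype.ext
    refine TensorProduct.ext' fun a x => ?_
    simp only [TensorProduct.lift.tmul, LinearMap.mk₂_apply, LinearMap.comp_apply,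
      TensorProduct.mk_apply]
    rw [← g.2]
    rw [gamma_smul_tmul, mul_one, ← Algebra.TensorProduct.one_def, one_smul]

/-- Transport `Hom_Γ(A, M)` along a `Γ`-linear equivalence in the first variable. -/
def compGammaEquiv (A B : Type) [AddCommGroup A] [AddCommGroup B] [Module k A] [Module k B]
    [Module (K ⊗[k] Λ) A] [Module (K ⊗[k] Λ) B]
    [IsScalarTower k (K ⊗[k] Λ) A] [IsScalarTower k (K ⊗[k] Λ) B]
    (e : A ≃ₗ[K ⊗[k] Λ] B) :
    homSpaceGamma k K Λ A M ≃ₗ[k] homSpaceGamma k K Λ B M where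
  toFun f := ⟨f.1.comp ((e.restrictScalars k).symm : B ≃ₗ[k] A).toLinearMap, by
    intro g b
    simp only [LinearMap.comp_apply, LinearEquiv.coe_coe]
    rw [show ((e.restrictScalars k).symm : B ≃ₗ[k] A) (g • b) = e.symm (g • b) from rfl,
      map_smul, f.2]
    rfl⟩
  invFun f := ⟨f.1.comp ((e.restrictScalars k) : A ≃ₗ[k] B).toLinearMap, by
    intro g a
    simp only [LinearMap.comp_apply, LinearEquiv.coe_coe]
    rw [show ((e.restrictScalars k) : A ≃ₗ[k] B) (g • a) = e (g • a) from rfl, map_smul, f.2]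
    rfl⟩
  map_add' f g := by apply Subtype.ext; rfl
  map_smul' c f := by apply Subtype.ext; rfl
  left_inv f := by
    apply Subtype.ext
    refine LinearMap.ext fun a => ?_
    simp
  right_inv f := by
    apply Subtype.ext
    refine LinearMap.ext fun b => ?_
    simp

set_option synthInstance.maxHeartbeats 800000 in
/-- `Hom_Γ(Xⁿ, M) ≅ Hom_Γ(X, M)ⁿ` as `k`-vector spaces. -/
def piGammaEquiv (n : ℕ) :
    homSpaceGamma k K Λ (Fin n → X) M ≃ₗ[k] (Fin n → homSpaceGamma k K Λ X M) where
  toFun f i := ⟨f.1.comp (LinearMap.single k (fun _ : Fin n => X) i), by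
    intro g x
    simp only [LinearMap.comp_apply, LinearMap.single_apply]
    have hs : (Pi.single i (g • x) : Fin n → X) = g • (Pi.single i x : Fin n → X) :=
      Pi.single_smul (f := fun _ : Fin n => X) i g x
    rw [hs, f.2]⟩
  invFun f := ⟨∑ i, (f i).1.comp (LinearMap.proj i), by
    intro g v
    simp only [LinearMap.sum_apply, LinearMap.comp_apply, LinearMap.proj_apply]
    rw [Finset.smul_sum]
    refine Finset.sum_congr rfl fun i _ => ?_
    rw [show (g • v) i = g • v i from rfl, (f i).2]⟩
  map_add' f g := by funext i; apply Subtype.ext; rfl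
  map_smul' c f := by funext i; apply Subtype.ext; rfl
  left_inv f := by
    apply Subtype.ext
    refine LinearMap.ext fun v => ?_
    simp only [LinearMap.sum_apply, LinearMap.comp_apply, LinearMap.proj_apply,
      LinearMap.single_apply]
    rw [← map_sum]
    congr 1
    exact Finset.univ_sum_single v
  right_inv f := by
    funext i
    apply Subtype.ext
    refine LinearMap.ext fun x => ?_
    simp only [LinearMap.comp_apply, LinearMap.single_apply, LinearMap.sum_apply,
      LinearMap.proj_apply]
    rw [Finset.sum_eq_single i]
    · rw [Pi.single_eq_same]
    · intro j _ hj
      rw [Pi.single_eq_of_ne hj, map_zero]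
    · simp

end WithM

end HomResAux

end Aux
/-- Let `k` be a field, `K` a finite extension of `k` of degree `n`, `Λ` a
`k`-algebra and `Γ = K ⊗ Λ`.  Assume that any two finite-dimensional `Γ`-modules which are
isomorphic as `Λ`-modules are already isomorphic as `Γ`-modules.  Then for all
finite-dimensional `Γ`-modules `X` and `M`,
`dim_k Hom_Λ(X, M) = n · dim_k Hom_Γ(X, M)`. -/
theorem finrank_homRes_eq_degree_mul_finrank_homGamma
    [FiniteDimensional k K]
    (h : ∀ (A B : Type) [AddCommGroup A] [AddCommGroup B] [Module k A] [Module k B]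
      [Module (K ⊗[k] Λ) A] [Module (K ⊗[k] Λ) B]
      [IsScalarTower k (K ⊗[k] Λ) A] [IsScalarTower k (K ⊗[k] Λ) B]
      [FiniteDimensional k A] [FiniteDimensional k B],
      (∃ e : A ≃ₗ[k] B, ∀ (l : Λ) (a : A),
        e ((((1 : K) ⊗ₜ[k] l : K ⊗[k] Λ)) • a) = (((1 : K) ⊗ₜ[k] l : K ⊗[k] Λ)) • e a) →
      Nonempty (A ≃ₗ[K ⊗[k] Λ] B))
    (X M : Type) [AddCommGroup X] [AddCommGroup M] [Module k X] [Module k M]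
    [Module (K ⊗[k] Λ) X] [Module (K ⊗[k] Λ) M]
    [IsScalarTower k (K ⊗[k] Λ) X] [IsScalarTower k (K ⊗[k] Λ) M]
    [FiniteDimensional k X] [FiniteDimensional k M] :
    Module.finrank k (homSpaceResBoth k K Λ X M)
      = Module.finrank k K * Module.finrank k (homSpaceGamma k K Λ X M) := by
  obtain ⟨e⟩ := h (K ⊗[k] X) (Fin (Module.finrank k K) → X)
    ⟨HomResAux.psi k K X, fun l v => HomResAux.psi_comm k K Λ X l v⟩
  have E :=
    ((HomResAux.adjEquiv k K Λ X M).trans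
      (HomResAux.compGammaEquiv k K Λ M (K ⊗[k] X) (Fin (Module.finrank k K) → X) e)).trans
      (HomResAux.piGammaEquiv k K Λ X M (Module.finrank k K))
  rw [E.finrank_eq, Module.finrank_pi_fintype k, Finset.sum_const, Finset.card_univ,
    Fintype.card_fin, smul_eq_mul]
end

section
/- Let k be an algebraically closed field and Λ a finite-dimensional k-algebra. For a finite-dimensional Λ-module M and a natural number i, let f_i(M) be the maximum of dim_k N over all submodules N of M that are generated by at most i elements. If M and N are finite-dimensional Λ-modules with M ≤_deg N, then f_i(M) ≥ f_i(N) for all i. -/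
/-!
Write the degeneration as `0 → X → X ⊕ M → N → 0` with first map `f = (α, β)` and second
map `g`. For all but finitely many `t ∈ k` the endomorphism `α - t` of `X` is invertible, and
then `f_t = f - t • inl` is again injective with cokernel `M`. A submodule of `N` generated by
`i` elements is `g(W)` for a submodule `W ⊆ X ⊕ M` generated by `i` elements, and
`dim g(W) = dim (W + im f) - dim X`; likewise for the image of `W` in `M = coker f_t`.
Since `t ↦ W + im f_t` is the range of a linear pencil of maps, its dimension at a generic `t`
is at least its dimension at `t = 0`, so the image of `W` in `M` is at least as large as `g(W)`.
-/

open TensorProduct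

/-- A witness that `M` degenerates to `N` over `R`: a finite-dimensional `R`-module `X`
together with a short exact sequence `0 → X → X ⊕ M → N → 0` of `R`-modules. -/
structure DegenerationWitness (k R M N : Type) [Field k] [Ring R] [Algebra k R]
    [AddCommGroup M] [AddCommGroup N] [Module R M] [Module R N] where
  X : Type
  [instAddX : AddCommGroup X]
  [instModkX : Module k X]
  [instModRX : Module R X]
  [instTowerX : IsScalarTower k R X]
  [instFinX : FiniteDimensional k X]
  f : X →ₗ[R] X × M
  g : X × M →ₗ[R] N
  f_inj : Function.Injective f
  g_surj : Function.Surjective g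
  exact : LinearMap.range f = LinearMap.ker g

/-- `M` degenerates to `N` over `R` (`M ≤_deg N`). -/
def Degenerates (k R M N : Type) [Field k] [Ring R] [Algebra k R]
    [AddCommGroup M] [AddCommGroup N] [Module R M] [Module R N] : Prop :=
  Nonempty (DegenerationWitness k R M N)

/-- `f_i(M)`: the maximum of `dim_k N` over all `Λ`-submodules `N` of `M` generated by at
most `i` elements. -/
noncomputable def maxGenSubdim (k Λ M : Type) [Field k] [Ring Λ] [Algebra k Λ]
    [AddCommGroup M] [Module k M] [Module Λ M] [IsScalarTower k Λ M] (i : ℕ) : ℕ :=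
  sSup {d : ℕ | ∃ N : Submodule Λ M,
    (∃ s : Finset M, s.card ≤ i ∧ Submodule.span Λ (s : Set M) = N) ∧
    d = Module.finrank k (N.restrictScalars k)}

open Module Filter

namespace LinearMap

variable {K V W : Type*} [Field K] [AddCommGroup V] [Module K V] [AddCommGroup W] [Module K W]
  [FiniteDimensional K V]

theorem eventually_bijective_sub_smul_one (a : End K V) :
    ∀ᶠ t in (cofinite : Filter K), Function.Bijective ⇑(a - t • (1 : End K V)) := by
  refine eventually_cofinite.2 (a.finite_hasEigenvalue.subset fun t ht => ?_)
  rw [Set.mem_ofPred_eq, End.hasEigenvalue_iff, End.eigenspace_def]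
  intro h
  exact ht ⟨ker_eq_bot.1 h, injective_iff_surjective.1 (ker_eq_bot.1 h)⟩

theorem eventually_injective_add_smul {L : V →ₗ[K] W} (hL : Function.Injective L)
    (D : V →ₗ[K] W) : ∀ᶠ t in (cofinite : Filter K), Function.Injective ⇑(L + t • D) := by
  obtain ⟨P, hPL⟩ := L.exists_leftInverse_of_injective (ker_eq_bot.2 hL)
  -- `P ∘ (L + t • D) = 1 + t • (P ∘ D)`, so a kernel vector is a `-t⁻¹`-eigenvector of `P ∘ D`.
  refine eventually_cofinite.2 <| ((End.finite_hasEigenvalue (P ∘ₗ D)).preimage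
    (neg_injective.comp inv_injective).injOn).subset fun t ht => ?_
  obtain ⟨x, hx, hx0⟩ : ∃ x, (L + t • D) x = 0 ∧ x ≠ 0 := by
    simpa [injective_iff_map_eq_zero] using ht
  have hPx : x + t • P (D x) = 0 := by
    simpa [← comp_apply P L, hPL] using congrArg P hx
  have ht0 : t ≠ 0 := by rintro rfl; simp_all
  refine End.hasEigenvalue_of_hasEigenvector ⟨End.mem_eigenspace_iff.2 ?_, hx0⟩
  rw [comp_apply, Function.comp_apply, neg_smul, eq_neg_iff_add_eq_zero, ← smul_right_inj ht0,
    smul_add, smul_inv_smul₀ ht0, add_comm, hPx, smul_zero]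

theorem eventually_finrank_range_le_finrank_range_add_smul (L D : V →ₗ[K] W) :
    ∀ᶠ t in (cofinite : Filter K), finrank K (range L) ≤ finrank K (range (L + t • D)) := by
  obtain ⟨V₀, hV₀⟩ := (ker L).exists_isCompl
  have hinj : Function.Injective (L ∘ₗ V₀.subtype) := by
    rw [← ker_eq_bot, ker_comp, ← Submodule.disjoint_iff_comap_eq_bot]
    exact hV₀.symm.disjoint
  filter_upwards [eventually_injective_add_smul hinj (D ∘ₗ V₀.subtype)] with t ht
  rw [← smul_comp, ← add_comp] at ht
  calc finrank K (range L) = finrank K V₀ := by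
        have := finrank_range_add_finrank_ker L
        have := Submodule.finrank_add_eq_of_isCompl hV₀
        omega
    _ = finrank K (range ((L + t • D) ∘ₗ V₀.subtype)) := (finrank_range_of_inj ht).symm
    _ ≤ finrank K (range (L + t • D)) := Submodule.finrank_mono (range_comp_le_range _ _)

end LinearMap

namespace Submodule

variable {K E X N : Type*} [Field K] [AddCommGroup E] [Module K E] [AddCommGroup X] [Module K X]
  [AddCommGroup N] [Module K N]

theorem eventually_finrank_sup_range_le_finrank_sup_range_sub_smul [FiniteDimensional K E]
    [FiniteDimensional K X] (W : Submodule K E) (f D : X →ₗ[K] E) :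
    ∀ᶠ t in (cofinite : Filter K),
      finrank K ↥(W ⊔ LinearMap.range f) ≤ finrank K ↥(W ⊔ LinearMap.range (f - t • D)) := by
  filter_upwards [(W.subtype.coprod f).eventually_finrank_range_le_finrank_range_add_smul
    ((0 : W →ₗ[K] E).coprod (-D))] with t ht
  have hcoprod : W.subtype.coprod f + t • (0 : W →ₗ[K] E).coprod (-D) =
      W.subtype.coprod (f - t • D) := by
    ext <;> simp [sub_eq_add_neg]
  rwa [hcoprod, LinearMap.range_coprod, LinearMap.range_coprod, range_subtype] at ht

theorem finrank_map_add_finrank_inf_ker (g : E →ₗ[K] N) (W : Submodule K E)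
    [FiniteDimensional K W] :
    finrank K (W.map g) + finrank K ↥(W ⊓ LinearMap.ker g) = finrank K W := by
  have h := LinearMap.finrank_range_add_finrank_ker (g.domRestrict W)
  rwa [LinearMap.range_domRestrict, LinearMap.ker_domRestrict, ← finrank_map_subtype_eq,
    map_comap_subtype] at h

theorem finrank_map_add_finrank_eq_finrank_sup_range [FiniteDimensional K E] {f : X →ₗ[K] E}
    {g : E →ₗ[K] N} (hf : Function.Injective f) (hfg : LinearMap.range f = LinearMap.ker g)
    (W : Submodule K E) :
    finrank K (W.map g) + finrank K X = finrank K ↥(W ⊔ LinearMap.range f) := by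
  have hmap := W.finrank_map_add_finrank_inf_ker g
  have hsup := finrank_sup_add_finrank_inf_eq W (LinearMap.range f)
  have hrange := LinearMap.finrank_range_of_inj hf
  rw [← hfg] at hmap
  omega

end Submodule

theorem LinearMap.exists_ker_eq_range_of_bijective_fst {R X M : Type*} [Ring R] [AddCommGroup X]
    [Module R X] [AddCommGroup M] [Module R M] (f : X →ₗ[R] X × M)
    (hf : Function.Bijective (LinearMap.fst R X M ∘ₗ f)) :
    ∃ q : X × M →ₗ[R] M, LinearMap.ker q = LinearMap.range f := by
  let e := LinearEquiv.ofBijective _ hf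
  refine ⟨LinearMap.snd R X M - LinearMap.snd R X M ∘ₗ f ∘ₗ e.symm.toLinearMap ∘ₗ
    LinearMap.fst R X M, ?_⟩
  ext ⟨x, m⟩
  have hfst : (f (e.symm x)).1 = x := e.apply_symm_apply x
  simp only [LinearMap.mem_ker, LinearMap.sub_apply, LinearMap.coe_comp, Function.comp_apply,
    LinearMap.snd_apply, LinearMap.fst_apply, LinearEquiv.coe_coe, sub_eq_zero,
    LinearMap.mem_range]
  constructor
  · exact fun h => ⟨e.symm x, Prod.ext hfst h.symm⟩
  · rintro ⟨y, hy⟩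
    rw [e.symm_apply_eq.2 (congrArg Prod.fst hy).symm, hy]

theorem Submodule.exists_finset_card_le_map_span_eq {R E N : Type*} [Ring R] [AddCommGroup E]
    [Module R E] [AddCommGroup N] [Module R N] {g : E →ₗ[R] N} (hg : Function.Surjective g)
    (s : Finset N) :
    ∃ T : Finset E, T.card ≤ s.card ∧ (span R (T : Set E)).map g = span R (s : Set N) := by
  classical
  refine ⟨s.image (Function.surjInv hg), Finset.card_image_le, ?_⟩
  rw [map_span, Finset.coe_image, Set.image_image]
  simp [Function.surjInv_eq hg]

section maxGenSubdim

variable {k Λ M : Type} [Field k] [Ring Λ] [Algebra k Λ] [AddCommGroup M] [Module k M]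
  [Module Λ M] [IsScalarTower k Λ M]

theorem finrank_span_le_maxGenSubdim [FiniteDimensional k M] {i : ℕ} {s : Finset M}
    (hs : s.card ≤ i) :
    finrank k ((Submodule.span Λ (s : Set M)).restrictScalars k) ≤ maxGenSubdim k Λ M i := by
  refine le_csSup ⟨finrank k M, ?_⟩ ⟨_, ⟨s, hs, rfl⟩, rfl⟩
  rintro _ ⟨N, -, rfl⟩
  exact Submodule.finrank_le _

theorem maxGenSubdim_le {i d : ℕ}
    (h : ∀ s : Finset M, s.card ≤ i →
      finrank k ((Submodule.span Λ (s : Set M)).restrictScalars k) ≤ d) :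
    maxGenSubdim k Λ M i ≤ d :=
  csSup_le' <| by
    rintro _ ⟨_, ⟨s, hs, rfl⟩, rfl⟩
    exact h s hs

end maxGenSubdim

attribute [instance] DegenerationWitness.instAddX DegenerationWitness.instModkX
  DegenerationWitness.instModRX DegenerationWitness.instTowerX DegenerationWitness.instFinX

theorem DegenerationWitness.exists_finset_card_le_finrank_span_le {k Λ M N : Type} [Field k]
    [Infinite k] [Ring Λ] [Algebra k Λ] [AddCommGroup M] [AddCommGroup N] [Module k M]
    [Module k N] [Module Λ M] [Module Λ N] [IsScalarTower k Λ M] [IsScalarTower k Λ N]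
    [FiniteDimensional k M] (w : DegenerationWitness k Λ M N) (s : Finset N) :
    ∃ S : Finset M, S.card ≤ s.card ∧
      finrank k ((Submodule.span Λ (s : Set N)).restrictScalars k) ≤
        finrank k ((Submodule.span Λ (S : Set M)).restrictScalars k) := by
  classical
  obtain ⟨T, hT, hgT⟩ := Submodule.exists_finset_card_le_map_span_eq w.g_surj s
  set W := Submodule.span Λ (T : Set (w.X × M)) with hW
  obtain ⟨t, hbij, hsup⟩ := ((((LinearMap.fst Λ w.X M ∘ₗ w.f).restrictScalars k)
    |>.eventually_bijective_sub_smul_one).and ((W.restrictScalars k)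
    |>.eventually_finrank_sup_range_le_finrank_sup_range_sub_smul (w.f.restrictScalars k)
      ((LinearMap.inl Λ w.X M).restrictScalars k))).exists
  set ft := w.f - t • LinearMap.inl Λ w.X M
  have hft : Function.Bijective (LinearMap.fst Λ w.X M ∘ₗ ft) := by
    convert hbij using 1
    ext x
    simp [ft]
  have hft_inj : Function.Injective ft := by
    have h := hft.injective
    rw [LinearMap.coe_comp] at h
    exact h.of_comp
  obtain ⟨q, hq⟩ := ft.exists_ker_eq_range_of_bijective_fst hft
  refine ⟨T.image q, Finset.card_image_le.trans hT, ?_⟩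
  rw [Finset.coe_image, ← Submodule.map_span, ← hgT, Submodule.restrictScalars_map,
    Submodule.restrictScalars_map, ← hW]
  have hg := (W.restrictScalars k).finrank_map_add_finrank_eq_finrank_sup_range
    (f := w.f.restrictScalars k) (g := w.g.restrictScalars k) w.f_inj
    (congrArg (Submodule.restrictScalars k) w.exact)
  have hq := (W.restrictScalars k).finrank_map_add_finrank_eq_finrank_sup_range
    (f := ft.restrictScalars k) (g := q.restrictScalars k) hft_inj
    (congrArg (Submodule.restrictScalars k) hq.symm)
  have hft_restrict : ft.restrictScalars k =
      w.f.restrictScalars k - t • (LinearMap.inl Λ w.X M).restrictScalars k := rfl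
  rw [hft_restrict] at hq
  omega

theorem maxGenSubdim_le_of_degenerates_general
    (k Λ : Type) [Field k] [IsAlgClosed k] [Ring Λ] [Algebra k Λ]
    (M N : Type) [AddCommGroup M] [AddCommGroup N] [Module k M] [Module k N]
    [Module Λ M] [Module Λ N] [IsScalarTower k Λ M] [IsScalarTower k Λ N]
    [FiniteDimensional k M]
    (h : Degenerates k Λ M N) :
    ∀ i : ℕ, maxGenSubdim k Λ N i ≤ maxGenSubdim k Λ M i := by
  intro i
  obtain ⟨w⟩ := h
  refine maxGenSubdim_le fun s hs => ?_
  obtain ⟨S, hS, hle⟩ := w.exists_finset_card_le_finrank_span_le s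
  exact hle.trans (finrank_span_le_maxGenSubdim (hS.trans hs))

/-- Let `k` be an algebraically closed field and `Λ` a finite-dimensional
`k`-algebra.  If `M` and `N` are finite-dimensional `Λ`-modules with `M ≤_deg N`, then
`f_i(M) ≥ f_i(N)` for all `i`, where `f_i` is the maximal `k`-dimension of a submodule
generated by at most `i` elements. -/
theorem maxGenSubdim_le_of_degenerates
    (k Λ : Type) [Field k] [IsAlgClosed k] [Ring Λ] [Algebra k Λ] [FiniteDimensional k Λ]
    (M N : Type) [AddCommGroup M] [AddCommGroup N] [Module k M] [Module k N]
    [Module Λ M] [Module Λ N] [IsScalarTower k Λ M] [IsScalarTower k Λ N]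
    [FiniteDimensional k M] [FiniteDimensional k N]
    (h : Degenerates k Λ M N) :
    ∀ i : ℕ, maxGenSubdim k Λ N i ≤ maxGenSubdim k Λ M i :=
  maxGenSubdim_le_of_degenerates_general k Λ M N h
end

section
/- Let K = ℚ(α) where α is a root of X³ − 2 (equivalently K = ℚ[X]/(X³ − 2)), and let μ : K ⊗_ℚ K → K be the multiplication map x ⊗ y ↦ xy, with L = ker μ. Then K ⊗_ℚ K ≅ K ⊕ L as modules over K ⊗_ℚ K (μ splits), L is isomorphic to K² as a K-vector space, and L is indecomposable as a K ⊗_ℚ K-module. -/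
/-!
Since `ℚ` has characteristic zero, `K / ℚ` is separable, hence unramified, so `K ⊗[ℚ] K` has
a separability idempotent `e`: `μ e = 1` and `(1 ⊗ s - s ⊗ 1) * e = 0` for all `s`.
Multiplication by `e` splits `μ`, `L = (1 - e)` and `(e)` is a complement of `L`. For the
`K`-action on the left factor, `L` has dimension `[K : ℚ] - 1 = 2`. Multiplication by `1 ⊗ α`
has no eigenvector in `L`: an eigenvalue `c` satisfies `c ^ 3 = 2`, so `c = α` because a field
of odd degree over `ℚ` has no primitive cube root of unity; but `L` is generated by
`1 ⊗ α - α ⊗ 1`, and an element of `L` annihilated by `L` is `0` since `L` is generated by an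
idempotent. Hence any nonzero `x ∈ L` and `(1 ⊗ α) * x` span `L` over `K`, so `L` is even a
simple module.
-/

open TensorProduct Module Polynomial

theorem KaehlerDifferential.ideal_eq_span_of_adjoin_eq_top {R S : Type*} [CommRing R]
    [CommRing S] [Algebra R S] {s : Set S} (hs : Algebra.adjoin R s = ⊤) :
    KaehlerDifferential.ideal R S =
      Ideal.span ((fun a ↦ (1 : S) ⊗ₜ[R] a - a ⊗ₜ[R] 1) '' s) := by
  set I := Ideal.span ((fun a ↦ (1 : S) ⊗ₜ[R] a - a ⊗ₜ[R] 1) '' s)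
  refine le_antisymm ?_ (Ideal.span_le.mpr ?_)
  · have : (Ideal.Quotient.mkₐ R I).comp Algebra.TensorProduct.includeRight =
        (Ideal.Quotient.mkₐ R I).comp Algebra.TensorProduct.includeLeft :=
      AlgHom.ext_of_adjoin_eq_top hs fun a ha ↦ by
        simpa [Ideal.Quotient.mk_eq_mk_iff_sub_mem] using
          Ideal.subset_span (Set.mem_image_of_mem _ ha)
    rw [← KaehlerDifferential.span_range_eq_ideal, Ideal.span_le, Set.range_subset_iff]
    intro a
    simpa [Ideal.Quotient.mk_eq_mk_iff_sub_mem] using congr($this a)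
  · rintro _ ⟨a, -, rfl⟩
    exact KaehlerDifferential.one_smul_sub_smul_one_mem_ideal R a

theorem KaehlerDifferential.finrank_ideal_add_one (F K : Type*) [Field F] [Field K]
    [Algebra F K] [FiniteDimensional F K] :
    finrank K (KaehlerDifferential.ideal F K) + 1 = finrank F K := by
  set μ := (Algebra.TensorProduct.lmul'' F (S := K)).toLinearMap
  have hμ : LinearMap.range μ = ⊤ :=
    LinearMap.range_eq_top.mpr fun x ↦
      ⟨x ⊗ₜ 1, by simp [μ, Algebra.TensorProduct.lmul'']⟩
  have := LinearMap.finrank_range_add_finrank_ker μ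
  rw [hμ, finrank_top, finrank_self, finrank_baseChange] at this
  rw [← this, add_comm]
  rfl

namespace Algebra.FormallyUnramified

variable {R S : Type*} [CommRing R] [CommRing S] [Algebra R S]
  [FormallyUnramified R S] [EssFiniteType R S]

theorem mul_elem_eq_zero_of_mem_ideal {x : S ⊗[R] S} (hx : x ∈ KaehlerDifferential.ideal R S) :
    x * elem R S = 0 := by
  have : KaehlerDifferential.ideal R S ≤ LinearMap.ker (LinearMap.mulRight _ (elem R S)) := by
    rw [← KaehlerDifferential.span_range_eq_ideal, Ideal.span_le, Set.range_subset_iff]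
    exact one_tmul_sub_tmul_one_mul_elem
  exact this hx

theorem mul_elem_eq_lmul'_tmul_one_mul_elem (a : S ⊗[R] S) :
    a * elem R S = (TensorProduct.lmul' R a ⊗ₜ 1) * elem R S := by
  rw [← sub_eq_zero, ← sub_mul]
  refine mul_elem_eq_zero_of_mem_ideal ?_
  simp [KaehlerDifferential.ideal, RingHom.mem_ker]

theorem one_sub_elem_mem_ideal : 1 - elem R S ∈ KaehlerDifferential.ideal R S := by
  simp [KaehlerDifferential.ideal, RingHom.mem_ker, lmul_elem]

theorem isIdempotentElem_elem : IsIdempotentElem (elem R S) := by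
  rw [IsIdempotentElem, mul_elem_eq_lmul'_tmul_one_mul_elem, lmul_elem,
    ← Algebra.TensorProduct.one_def, one_mul]

theorem eq_zero_of_mem_ideal_of_forall_mul_eq_zero {x : S ⊗[R] S}
    (hx : x ∈ KaehlerDifferential.ideal R S)
    (h : ∀ y ∈ KaehlerDifferential.ideal R S, y * x = 0) : x = 0 := by
  calc x = (1 - elem R S) * x := by
        rw [sub_mul, one_mul, mul_comm, mul_elem_eq_zero_of_mem_ideal hx, sub_zero]
    _ = 0 := h _ one_sub_elem_mem_ideal

theorem isCompl_ideal_span_elem :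
    IsCompl (KaehlerDifferential.ideal R S) (Ideal.span {elem R S}) := by
  refine ⟨Submodule.disjoint_def.mpr fun x hxI hxt ↦ ?_,
    Submodule.codisjoint_iff_exists_add_eq.mpr fun x ↦ ?_⟩
  · obtain ⟨y, rfl⟩ := Ideal.mem_span_singleton'.mp hxt
    rw [← isIdempotentElem_elem.eq, ← mul_assoc]
    exact mul_elem_eq_zero_of_mem_ideal hxI
  · exact ⟨x * (1 - elem R S), x * elem R S, Ideal.mul_mem_left _ _ one_sub_elem_mem_ideal,
      Ideal.mul_mem_left _ _ (Ideal.mem_span_singleton_self _), by ring⟩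

theorem exists_section_lmul' : ∃ ν : S →ₗ[R] S ⊗[R] S,
    (∀ x, TensorProduct.lmul' R (ν x) = x) ∧
    ∀ a x, ν (TensorProduct.lmul' R a * x) = a * ν x := by
  refine ⟨LinearMap.mulRight R (elem R S) ∘ₗ Algebra.TensorProduct.includeLeft.toLinearMap,
    fun x ↦ ?_, fun a x ↦ ?_⟩
  · simp [lmul_elem]
  · simp only [LinearMap.coe_comp, Function.comp_apply, AlgHom.toLinearMap_apply,
      Algebra.TensorProduct.includeLeft_apply, LinearMap.mulRight_apply]
    rw [mul_left_comm, mul_elem_eq_lmul'_tmul_one_mul_elem a, ← mul_assoc,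
      Algebra.TensorProduct.tmul_mul_tmul, mul_one, mul_comm x]

end Algebra.FormallyUnramified

theorem isSimpleModule_of_finrank_eq_two {K A M : Type*} [Field K] [Ring A] [SMul K A]
    [AddCommGroup M] [Module K M] [Module A M] [IsScalarTower K A M]
    (hM : finrank K M = 2) (T : A) (hT : ∀ (c : K) (x : M), T • x = c • x → x = 0) :
    IsSimpleModule A M := by
  have : Nontrivial M := Module.nontrivial_of_finrank_pos (R := K) (by omega)
  refine isSimpleModule_iff_toSpanSingleton_surjective.mpr ⟨this, fun x hx ↦ ?_⟩
  rw [← LinearMap.range_eq_top, ← LinearMap.span_singleton_eq_range, eq_top_iff]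
  have hli : LinearIndependent K ![x, T • x] := by
    refine LinearIndependent.pair_iff.mpr fun s t hst ↦ ?_
    by_cases ht : t = 0
    · subst ht
      simpa [hx] using hst
    · refine absurd (hT (-(t⁻¹ * s)) x ?_) hx
      rw [neg_smul, mul_smul, ← smul_neg, ← eq_neg_of_add_eq_zero_right hst, smul_smul,
        inv_mul_cancel₀ ht, one_smul]
  rw [← Submodule.restrictScalars_le K, Submodule.restrictScalars_top,
    ← hli.span_eq_top_of_card_eq_finrank (by simp [hM]), Submodule.span_le,
    Matrix.range_cons_cons_empty, Set.insert_subset_iff, Set.singleton_subset_iff]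
  exact ⟨Submodule.mem_span_singleton_self x,
    Submodule.smul_mem _ T (Submodule.mem_span_singleton_self x)⟩

theorem rat_pow_three_ne_two (b : ℚ) : b ^ 3 ≠ 2 := by
  intro hb
  have := congrArg (padicValRat 2) hb
  have h2 : padicValRat 2 (2 : ℚ) = 1 := mod_cast padicValRat.self (p := 2) one_lt_two
  rw [padicValRat.pow, h2] at this
  omega

section PureCubic

variable {K : Type*} [Field K] [Algebra ℚ K] {α : K}

theorem finrank_eq_three_of_pow_three_eq_two (hα : α ^ 3 = 2)
    (hgen : Algebra.adjoin ℚ {α} = ⊤) : finrank ℚ K = 3 := by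
  have hirr : Irreducible (X ^ 3 - C (2 : ℚ)) :=
    X_pow_sub_C_irreducible_of_prime Nat.prime_three rat_pow_three_ne_two
  have hroot : aeval α (X ^ 3 - C (2 : ℚ)) = 0 := by simp [hα]
  have hmonic : (X ^ 3 - C (2 : ℚ)).Monic := monic_X_pow_sub_C _ three_ne_zero
  have hmin := minpoly.eq_of_irreducible_of_monic hirr hroot hmonic
  rw [← IntermediateField.finrank_top', ← IntermediateField.adjoin_eq_top_of_algebra ℚ _ hgen,
    IntermediateField.adjoin.finrank ⟨_, hmonic, hroot⟩, ← hmin, natDegree_X_pow_sub_C]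

theorem eq_one_of_pow_three_eq_one [FiniteDimensional ℚ K] (hK : Odd (finrank ℚ K)) {x : K}
    (hx : x ^ 3 = 1) : x = 1 := by
  by_contra hx1
  have hω : x ^ 2 + x + 1 = 0 := by
    have : (x - 1) * (x ^ 2 + x + 1) = 0 := by linear_combination hx
    exact (mul_eq_zero.mp this).resolve_left (sub_ne_zero.mpr hx1)
  have hint : IsIntegral ℚ x := .of_finite ℚ x
  have hdvd : minpoly ℚ x ∣ X ^ 2 + X + 1 := minpoly.dvd ℚ x (by simp [hω])
  have hle : (minpoly ℚ x).natDegree ≤ 2 :=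
    (natDegree_le_of_dvd hdvd (Monic.ne_zero (by monicity!))).trans (by compute_degree!)
  have hdeg : (minpoly ℚ x).natDegree = 1 := by
    obtain ⟨k, hk⟩ := hK.of_dvd_nat (minpoly.degree_dvd hint)
    omega
  obtain ⟨r, rfl⟩ := minpoly.natDegree_eq_one_iff.mp hdeg
  have : r ^ 2 + r + 1 = 0 :=
    (algebraMap ℚ K).injective (by simpa only [map_add, map_pow, map_one, map_zero] using hω)
  nlinarith [sq_nonneg (2 * r + 1)]

theorem eq_of_pow_three_eq [FiniteDimensional ℚ K] (hK : Odd (finrank ℚ K)) {a b : K}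
    (h : a ^ 3 = b ^ 3) : a = b := by
  rcases eq_or_ne b 0 with rfl | hb
  · simpa using h
  · rw [← div_eq_one_iff_eq hb]
    exact eq_one_of_pow_three_eq_one hK (by rw [div_pow, h, div_self (pow_ne_zero 3 hb)])

theorem eq_zero_of_one_tmul_mul_eq_smul (hα : α ^ 3 = 2) (hgen : Algebra.adjoin ℚ {α} = ⊤)
    {x : K ⊗[ℚ] K} (hx : x ∈ KaehlerDifferential.ideal ℚ K) {c : K}
    (h : (1 ⊗ₜ α) * x = c • x) : x = 0 := by
  have hK := finrank_eq_three_of_pow_three_eq_two hα hgen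
  have : FiniteDimensional ℚ K := .of_finrank_pos (by omega)
  have : Algebra.FormallyUnramified ℚ K := .of_isSeparable ℚ K
  have hT : (1 ⊗ₜ[ℚ] α : K ⊗[ℚ] K) ^ 3 = 2 := by
    rw [← Algebra.TensorProduct.includeRight_apply, ← map_pow, hα, map_ofNat]
  rw [Algebra.smul_def] at h
  have hcube : (2 - c ^ 3) • x = 0 := by
    rw [Algebra.smul_def, map_sub, map_ofNat, map_pow]
    set T : K ⊗[ℚ] K := 1 ⊗ₜ α
    set C := algebraMap K (K ⊗[ℚ] K) c
    linear_combination (T ^ 2 + T * C + C ^ 2) * h - x * hT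
  obtain hc | rfl := smul_eq_zero.mp hcube
  · have hc : c = α := eq_of_pow_three_eq (by rw [hK]; decide) (by linear_combination -hc - hα)
    subst hc
    refine Algebra.FormallyUnramified.eq_zero_of_mem_ideal_of_forall_mul_eq_zero hx fun y hy ↦ ?_
    rw [KaehlerDifferential.ideal_eq_span_of_adjoin_eq_top hgen, Set.image_singleton] at hy
    obtain ⟨z, rfl⟩ := Ideal.mem_span_singleton'.mp hy
    rw [mul_assoc, sub_mul, h, Algebra.TensorProduct.algebraMap_apply, Algebra.algebraMap_self,
      RingHom.id_apply, sub_self, mul_zero]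
  · rfl

end PureCubic

/-- Let `K = ℚ(α)` where `α` is a root of `X³ - 2`.  Let
`μ : K ⊗_ℚ K → K` be the multiplication map `x ⊗ y ↦ x * y` and `L = ker μ`.  Then:
(1) `μ` splits as a map of `K ⊗_ℚ K`-modules (where `K` is a `K ⊗_ℚ K`-module via `μ`),
so `K ⊗_ℚ K ≅ K ⊕ L` as `K ⊗_ℚ K`-modules; in particular `L` has a complementary
submodule in `K ⊗_ℚ K`;
(2) `L ≅ K²` as `K`-vector spaces (for the `K`-action on the left tensor factor);
(3) `L` is an indecomposable `K ⊗_ℚ K`-module. -/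
theorem kernel_mul_indecomposable
    (K : Type) [Field K] [Algebra ℚ K] (α : K) (hα : α ^ 3 = 2)
    (hgen : Algebra.adjoin ℚ ({α} : Set K) = ⊤)
    (L : Ideal (K ⊗[ℚ] K)) (hL : L = RingHom.ker (Algebra.TensorProduct.lmul' ℚ
      (S := K)).toRingHom) :
    ((∃ ν : K →ₗ[ℚ] K ⊗[ℚ] K,
        (∀ x : K, Algebra.TensorProduct.lmul' ℚ (S := K) (ν x) = x) ∧
        (∀ (a : K ⊗[ℚ] K) (x : K), ν (Algebra.TensorProduct.lmul' ℚ (S := K) a * x)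
          = a * ν x)) ∧
      (∃ I : Ideal (K ⊗[ℚ] K), IsCompl L I)) ∧
    Nonempty ((L.restrictScalars K) ≃ₗ[K] (Fin 2 → K)) ∧
    (Nontrivial L ∧
      ∀ p q : Submodule (K ⊗[ℚ] K) L, IsCompl p q → p = ⊥ ∨ q = ⊥) := by
  have hK := finrank_eq_three_of_pow_three_eq_two hα hgen
  have : FiniteDimensional ℚ K := .of_finrank_pos (by omega)
  have : Algebra.FormallyUnramified ℚ K := .of_isSeparable ℚ K
  obtain rfl : L = KaehlerDifferential.ideal ℚ K := hL
  have hL2 : finrank K (KaehlerDifferential.ideal ℚ K) = 2 := by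
    have := KaehlerDifferential.finrank_ideal_add_one ℚ K
    omega
  have : IsSimpleModule (K ⊗[ℚ] K) (KaehlerDifferential.ideal ℚ K) :=
    isSimpleModule_of_finrank_eq_two hL2 (1 ⊗ₜ α) fun c x hx ↦
      Subtype.ext (eq_zero_of_one_tmul_mul_eq_smul hα hgen x.2 congr(($hx : K ⊗[ℚ] K)))
  refine ⟨⟨Algebra.FormallyUnramified.exists_section_lmul', _,
    Algebra.FormallyUnramified.isCompl_ideal_span_elem⟩,
    ⟨LinearEquiv.ofFinrankEq _ _ (by rw [Module.finrank_fin_fun]; exact hL2)⟩,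
    IsSimpleModule.nontrivial (K ⊗[ℚ] K) _, fun p q hpq ↦ ?_⟩
  obtain rfl | rfl := eq_bot_or_eq_top p
  · exact .inl rfl
  · exact .inr (eq_bot_of_isCompl_top hpq.symm)
end

section
/- Let k be a field, Λ the exterior algebra over k in three variables X, Y, Z, and 𝔯 its Jacobson radical. There is no injective Λ-module homomorphism from Λ/𝔯² to 𝔯/𝔯³. -/
set_option linter.unnecessarySimpa false
set_option linter.unusedVariables false

noncomputable section

variable (k : Type) [Field k]

/-- The exterior algebra over `k` in three variables `X`, `Y`, `Z`. -/
abbrev E3 : Type := ExteriorAlgebra k (Fin 3 → k)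

instance instE3SelfModule : Module (E3 k) (E3 k) := Semiring.toModule

/-- The three generators `X`, `Y`, `Z` of the exterior algebra. -/
def gen (i : Fin 3) : E3 k := ExteriorAlgebra.ι k (Pi.single i 1)

/-- The Jacobson radical `𝔯` of the exterior algebra in three variables: the two-sided
ideal generated by the generators `X`, `Y`, `Z`, here realised as the `k`-linear span of
all products `a * Xᵢ * b`. -/
def rad : Submodule k (E3 k) :=
  Submodule.span k {x | ∃ (a b : E3 k) (i : Fin 3), x = a * gen k i * b}

theorem mul_mem_rad_left (c : E3 k) {x : E3 k} (hx : x ∈ rad k) : c * x ∈ rad k := by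
  induction hx using Submodule.span_induction with
  | mem y hy =>
    obtain ⟨a, b, i, rfl⟩ := hy
    exact Submodule.subset_span ⟨c * a, b, i, by rw [mul_assoc, mul_assoc, mul_assoc]⟩
  | zero => simpa using (rad k).zero_mem
  | add x y _ _ hx hy => rw [mul_add]; exact add_mem hx hy
  | smul r x _ hx => rw [mul_smul_comm]; exact Submodule.smul_mem _ _ hx

theorem mul_mem_radPow_left (n : ℕ) (c : E3 k) {x : E3 k}
    (hx : x ∈ rad k ^ (n + 1)) : c * x ∈ rad k ^ (n + 1) := by
  rw [pow_succ'] at hx ⊢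
  refine Submodule.mul_induction_on hx ?_ ?_
  · intro m hm y hy
    rw [← mul_assoc]
    exact Submodule.mul_mem_mul (mul_mem_rad_left k c hm) hy
  · intro a b ha hb
    rw [mul_add]
    exact add_mem ha hb

/-- The powers of the radical as left ideals: `radL n = 𝔯^(n+1)`. -/
def radL (n : ℕ) : Ideal (E3 k) where
  carrier := (rad k ^ (n + 1) : Submodule k (E3 k))
  add_mem' := fun ha hb => add_mem ha hb
  zero_mem' := zero_mem _
  smul_mem' := fun c x hx => mul_mem_radPow_left k n c hx

theorem mem_radL_iff (n : ℕ) (x : E3 k) : x ∈ radL k n ↔ x ∈ rad k ^ (n + 1) := Iff.rfl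

theorem gen_mem_rad (i : Fin 3) : gen k i ∈ rad k :=
  Submodule.subset_span ⟨1, 1, i, by rw [one_mul, mul_one]⟩

theorem gen_mem_radL0 (i : Fin 3) : gen k i ∈ radL k 0 := by
  rw [mem_radL_iff, pow_one]
  exact gen_mem_rad k i

theorem mul_gen_mem_radL0 (a : E3 k) (i : Fin 3) : a * gen k i ∈ radL k 0 := by
  rw [mem_radL_iff, pow_one]
  exact mul_mem_rad_left k a (gen_mem_rad k i)

theorem comb_mem_radL0 (a b : E3 k) (i j : Fin 3) :
    a * gen k i + b * gen k j ∈ radL k 0 :=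
  add_mem (mul_gen_mem_radL0 k a i) (mul_gen_mem_radL0 k b j)

/-- `𝔯³` viewed inside `𝔯`, i.e. as a submodule of the `Λ`-module `𝔯`. -/
def radLsub : Submodule (E3 k) (radL k 0) :=
  Submodule.comap (radL k 0).subtype (radL k 2)


/-- The algebra map to the trivial square-zero extension, used to read off the
degree-`0` and degree-`1` components of an element of the exterior algebra. -/
def phi3 : E3 k →ₐ[k] TrivSqZeroExt k (Fin 3 → k) :=
  ExteriorAlgebra.toTrivSqZeroExt

theorem phi3_gen (i : Fin 3) : phi3 k (gen k i) = TrivSqZeroExt.inr (Pi.single i 1) :=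
  ExteriorAlgebra.toTrivSqZeroExt_ι _

theorem ι_mem_rad (m : Fin 3 → k) : ExteriorAlgebra.ι k m ∈ rad k := by
  have hm : m = ∑ i : Fin 3, m i • (Pi.single i 1 : Fin 3 → k) := by
    ext j
    simp [Pi.single_apply, Finset.sum_apply]
  rw [hm, map_sum]
  refine Submodule.sum_mem _ fun i _ => ?_
  rw [map_smul]
  exact Submodule.smul_mem _ _ (gen_mem_rad k i)

theorem sub_fst_mem_rad (x : E3 k) :
    x - algebraMap k (E3 k) ((phi3 k x).fst) ∈ rad k := by
  induction x using ExteriorAlgebra.induction with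
  | algebraMap r =>
    rw [AlgHom.commutes, TrivSqZeroExt.algebraMap_eq_inl, TrivSqZeroExt.fst_inl, sub_self]
    exact zero_mem _
  | ι m =>
    rw [show phi3 k (ExteriorAlgebra.ι k m) = TrivSqZeroExt.inr m from
      ExteriorAlgebra.toTrivSqZeroExt_ι _]
    simpa using ι_mem_rad k m
  | mul a b ha hb =>
    have key : a * b - algebraMap k (E3 k) ((phi3 k (a * b)).fst)
        = a * (b - algebraMap k (E3 k) ((phi3 k b).fst))
          + (phi3 k b).fst • (a - algebraMap k (E3 k) ((phi3 k a).fst)) := by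
      rw [map_mul, TrivSqZeroExt.fst_mul, map_mul, Algebra.smul_def, mul_sub, mul_sub,
        Algebra.commutes ((phi3 k b).fst) a,
        Algebra.commutes ((phi3 k b).fst) (algebraMap k (E3 k) ((phi3 k a).fst))]
      abel
    rw [key]
    exact add_mem (mul_mem_rad_left k a hb) (Submodule.smul_mem _ _ ha)
  | add a b ha hb =>
    have key : a + b - algebraMap k (E3 k) ((phi3 k (a + b)).fst)
        = (a - algebraMap k (E3 k) ((phi3 k a).fst))
          + (b - algebraMap k (E3 k) ((phi3 k b).fst)) := by
      rw [map_add, TrivSqZeroExt.fst_add, map_add]; abel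
    rw [key]
    exact add_mem ha hb

theorem fst_eq_zero_of_mem_rad {x : E3 k} (hx : x ∈ rad k) : (phi3 k x).fst = 0 := by
  induction hx using Submodule.span_induction with
  | mem y hy =>
    obtain ⟨a, b, i, rfl⟩ := hy
    simp [map_mul, phi3_gen]
  | zero => simp
  | add x y _ _ hx hy => simp [map_add, hx, hy]
  | smul r x _ hx => simp [map_smul, hx]

theorem phi3_eq_zero_of_mem_radsq {x : E3 k} (hx : x ∈ rad k ^ 2) : phi3 k x = 0 := by
  rw [sq] at hx
  refine Submodule.mul_induction_on hx ?_ ?_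
  · intro m hm n hn
    have h1 := fst_eq_zero_of_mem_rad k hm
    have h2 := fst_eq_zero_of_mem_rad k hn
    rw [map_mul]
    ext
    · simp [h1, h2]
    · simp [TrivSqZeroExt.snd_mul, h1, h2]
  · intro a b ha hb
    simp [map_add, ha, hb]

theorem rad_mul_mem {x y : E3 k} (hx : x ∈ rad k) (hy : y ∈ rad k) :
    x * y ∈ rad k ^ 2 := by
  rw [sq]; exact Submodule.mul_mem_mul hx hy

theorem rad_mul_radsq_mem {x y : E3 k} (hx : x ∈ rad k) (hy : y ∈ rad k ^ 2) :
    x * y ∈ rad k ^ 3 := by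
  have h3 : rad k ^ 3 = rad k * rad k ^ 2 := by
    rw [pow_succ, sq, mul_assoc, ← sq, ← pow_succ']
  rw [h3]
  exact Submodule.mul_mem_mul hx hy

theorem decomp_of_mem_rad {v : E3 k} (hv : v ∈ rad k) :
    v - ExteriorAlgebra.ι k ((phi3 k v).snd) ∈ rad k ^ 2 := by
  induction hv using Submodule.span_induction with
  | mem y hy =>
    obtain ⟨a, b, i, rfl⟩ := hy
    have hsnd : (phi3 k (a * gen k i * b)).snd
        = ((phi3 k a).fst * (phi3 k b).fst) • (Pi.single i 1 : Fin 3 → k) := by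
      simp [map_mul, phi3_gen, TrivSqZeroExt.snd_mul, op_smul_eq_smul,
        mul_smul, smul_comm ((phi3 k b).fst)]
    have hι : ExteriorAlgebra.ι k ((phi3 k (a * gen k i * b)).snd)
        = ((phi3 k a).fst * (phi3 k b).fst) • gen k i := by
      rw [hsnd, map_smul]; rfl
    rw [hι]
    have key : a * gen k i * b - ((phi3 k a).fst * (phi3 k b).fst) • gen k i
        = (a - algebraMap k (E3 k) ((phi3 k a).fst)) * (gen k i * b)
          + (phi3 k a).fst • (gen k i * (b - algebraMap k (E3 k) ((phi3 k b).fst))) := by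
      have e1 : algebraMap k (E3 k) ((phi3 k a).fst)
            * (gen k i * algebraMap k (E3 k) ((phi3 k b).fst))
          = ((phi3 k a).fst * (phi3 k b).fst) • gen k i := by
        rw [← Algebra.commutes ((phi3 k b).fst) (gen k i), ← mul_assoc, ← map_mul,
          ← Algebra.smul_def]
      rw [sub_mul, Algebra.smul_def ((phi3 k a).fst), mul_sub, mul_sub, e1,
        mul_assoc a (gen k i) b]
      abel
    rw [key]
    refine add_mem ?_ (Submodule.smul_mem _ _ ?_)
    · exact rad_mul_mem k (sub_fst_mem_rad k a)
        (Submodule.subset_span ⟨1, b, i, by rw [one_mul]⟩)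
    · exact rad_mul_mem k (gen_mem_rad k i) (sub_fst_mem_rad k b)
  | zero => simp
  | add x y _ _ hx hy =>
    have : x + y - ExteriorAlgebra.ι k ((phi3 k (x + y)).snd)
        = (x - ExteriorAlgebra.ι k ((phi3 k x).snd))
          + (y - ExteriorAlgebra.ι k ((phi3 k y).snd)) := by
      rw [map_add, TrivSqZeroExt.snd_add, map_add]; abel
    rw [this]; exact add_mem hx hy
  | smul r x _ hx =>
    have : r • x - ExteriorAlgebra.ι k ((phi3 k (r • x)).snd)
        = r • (x - ExteriorAlgebra.ι k ((phi3 k x).snd)) := by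
      rw [map_smul, TrivSqZeroExt.snd_smul, map_smul, smul_sub]
    rw [this]; exact Submodule.smul_mem _ _ hx

/-- For any `v ∈ 𝔯` there is `u ∉ 𝔯²` with `u * v ∈ 𝔯³`. -/
theorem exists_annihilator {v : E3 k} (hv : v ∈ rad k) :
    ∃ u : E3 k, u ∉ rad k ^ 2 ∧ u * v ∈ rad k ^ 3 := by
  set w : Fin 3 → k := (phi3 k v).snd with hw
  have hdec := decomp_of_mem_rad k hv
  by_cases h0 : w = 0
  · -- v ∈ 𝔯², take u = X
    have hv2 : v ∈ rad k ^ 2 := by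
      have := hdec
      rw [← hw, h0, map_zero, sub_zero] at this
      exact this
    refine ⟨gen k 0, ?_, rad_mul_radsq_mem k (gen_mem_rad k 0) hv2⟩
    intro hmem
    have := phi3_eq_zero_of_mem_radsq k hmem
    rw [phi3_gen] at this
    have : (Pi.single 0 (1:k) : Fin 3 → k) = 0 := by
      simpa using congrArg TrivSqZeroExt.snd this
    have := congrFun this 0
    simp at this
  · -- take u = ι w
    refine ⟨ExteriorAlgebra.ι k w, ?_, ?_⟩
    · intro hmem
      have := phi3_eq_zero_of_mem_radsq k hmem
      rw [show phi3 k (ExteriorAlgebra.ι k w) = TrivSqZeroExt.inr w from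
        ExteriorAlgebra.toTrivSqZeroExt_ι _] at this
      exact h0 (by simpa using congrArg TrivSqZeroExt.snd this)
    · have : ExteriorAlgebra.ι k w * v
          = ExteriorAlgebra.ι k w * (v - ExteriorAlgebra.ι k w)
            + ExteriorAlgebra.ι k w * ExteriorAlgebra.ι k w := by
        rw [mul_sub]; abel
      rw [this, ExteriorAlgebra.ι_sq_zero, add_zero]
      exact rad_mul_radsq_mem k (ι_mem_rad k w) hdec

/-- Let `k` be a field, `Λ = ⋀(k³)` the exterior algebra in three
variables `X, Y, Z` and `𝔯` its Jacobson radical.  There is no injective `Λ`-module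
homomorphism from `Λ/𝔯²` to `𝔯/𝔯³`. -/
theorem no_injective_hom (k : Type) [Field k] :
    ¬ ∃ f : (E3 k ⧸ radL k 1) →ₗ[E3 k] ((radL k 0) ⧸ radLsub k),
        Function.Injective f := by
  rintro ⟨f, hf⟩
  obtain ⟨v, hv⟩ := Submodule.Quotient.mk_surjective (radLsub k)
    (f (Submodule.Quotient.mk 1))
  have hvrad : (v : E3 k) ∈ rad k := by
    have h := v.2
    rw [mem_radL_iff, pow_one] at h
    exact h
  obtain ⟨u, hu2, hu3⟩ := exists_annihilator k hvrad
  have hfu : f (Submodule.Quotient.mk u) = 0 := by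
    have h1 : (Submodule.Quotient.mk u : E3 k ⧸ radL k 1)
        = u • Submodule.Quotient.mk 1 := by
      rw [← Submodule.Quotient.mk_smul]
      congr 1
      simp [smul_eq_mul]
    rw [h1, map_smul, ← hv, ← Submodule.Quotient.mk_smul]
    rw [Submodule.Quotient.mk_eq_zero]
    show (↑(u • v) : E3 k) ∈ radL k 2
    rw [mem_radL_iff]
    exact hu3
  have : (Submodule.Quotient.mk u : E3 k ⧸ radL k 1) = Submodule.Quotient.mk 0 := by
    apply hf
    rw [hfu, Submodule.Quotient.mk_zero, map_zero]
  rw [Submodule.Quotient.eq] at this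
  apply hu2
  have h := this
  rw [sub_zero] at h
  exact h


end
end
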